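/- Let Z be a convex subset of a real vector space V and p : V → [0,∞) a seminorm with p(x) ≤ a for all x ∈ Z. Then for all x, y ∈ Z, p(x - y) ≤ 2a·(1 - t_y(x)) ≤ 2a·(1 - b(y)). -/

import Mathlib

/-- The weight function `t_y(x) = sup{ t ∈ [0,1) : (y - t·x)/(1-t) ∈ Z }`. -/
noncomputable def weight {V : Type*} [AddCommGroup V] [Module ℝ V] (Z : Set V) (y x : V) : ℝ :=
  sSup {t : ℝ | 0 ≤ t ∧ t < 1 ∧ (1 - t)⁻¹ • (y - t • x) ∈ Z}

/-- The boundariness `b(y) = inf_{x ∈ Z} t_y(x)`. -/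
noncomputable def bdness {V : Type*} [AddCommGroup V] [Module ℝ V] (Z : Set V) (y : V) : ℝ :=
  sInf (weight Z y '' Z)

/-!
If `t` is admissible for `t_y(x)`, then `z = (y - t·x)/(1-t)` lies in `Z` and
`x - y = (1 - t)(x - z)`, so `p(x - y) ≤ (1 - t)(p x + p z) ≤ 2a(1 - t)`.
Taking the supremum over admissible `t` gives the first bound; the second is `b(y) ≤ t_y(x)`.
-/

open scoped Pointwise in
theorem le_sub_mul_csSup {S : Set ℝ} (hS : S.Nonempty) {k c v : ℝ} (hk : 0 ≤ k)
    (h : ∀ s ∈ S, v ≤ c - k * s) : v ≤ c - k * sSup S := by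
  have hkS : sSup (k • S) ≤ c - v := by
    refine csSup_le hS.smul_set ?_
    rintro _ ⟨s, hs, rfl⟩
    linarith [h s hs, smul_eq_mul k s]
  rw [Real.sSup_smul_of_nonneg hk, smul_eq_mul] at hkS
  linarith

theorem Seminorm.sub_le_one_sub_mul_add {V : Type*} [AddCommGroup V] [Module ℝ V]
    (p : Seminorm ℝ V) {t : ℝ} (ht : t < 1) (x y : V) :
    p (x - y) ≤ (1 - t) * (p x + p ((1 - t)⁻¹ • (y - t • x))) := by
  have ht' : (1 - t) ≠ 0 := by linarith
  have hxy : x - y = (1 - t) • (x - (1 - t)⁻¹ • (y - t • x)) := by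
    rw [smul_sub, smul_inv_smul₀ ht']
    module
  calc p (x - y) = (1 - t) * p (x - (1 - t)⁻¹ • (y - t • x)) := by
        rw [hxy, map_smul_eq_mul, Real.norm_of_nonneg (by linarith)]
    _ ≤ (1 - t) * (p x + p ((1 - t)⁻¹ • (y - t • x))) :=
        mul_le_mul_of_nonneg_left (map_sub_le_add p _ _) (by linarith)

section weight

variable {V : Type*} [AddCommGroup V] [Module ℝ V] {Z : Set V} {x y : V}

theorem zero_mem_weight_set (hy : y ∈ Z) :
    (0 : ℝ) ∈ {t : ℝ | 0 ≤ t ∧ t < 1 ∧ (1 - t)⁻¹ • (y - t • x) ∈ Z} :=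
  ⟨le_rfl, one_pos, by simpa using hy⟩

theorem weight_nonneg (hy : y ∈ Z) : 0 ≤ weight Z y x :=
  le_csSup ⟨1, fun _ hs => hs.2.1.le⟩ (zero_mem_weight_set hy)

theorem bdness_le_weight (hx : x ∈ Z) (hy : y ∈ Z) : bdness Z y ≤ weight Z y x :=
  csInf_le ⟨0, by rintro _ ⟨x', -, rfl⟩; exact weight_nonneg hy⟩ ⟨x, hx, rfl⟩

end weight

theorem seminorm_le_of_weight_general {V : Type*} [AddCommGroup V] [Module ℝ V]
    (Z : Set V) (p : Seminorm ℝ V) (a : ℝ)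
    (hpa : ∀ x ∈ Z, p x ≤ a)
    (x y : V) (hx : x ∈ Z) (hy : y ∈ Z) :
    p (x - y) ≤ 2 * a * (1 - weight Z y x) ∧
      2 * a * (1 - weight Z y x) ≤ 2 * a * (1 - bdness Z y) := by
  have ha : 0 ≤ a := (apply_nonneg p x).trans (hpa x hx)
  constructor
  · have hadmissible : ∀ s ∈ {t : ℝ | 0 ≤ t ∧ t < 1 ∧ (1 - t)⁻¹ • (y - t • x) ∈ Z},
        p (x - y) ≤ 2 * a - 2 * a * s := by
      rintro s ⟨-, hs1, hz⟩
      calc p (x - y) ≤ (1 - s) * (p x + p ((1 - s)⁻¹ • (y - s • x))) :=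
            p.sub_le_one_sub_mul_add hs1 x y
        _ ≤ (1 - s) * (a + a) :=
            mul_le_mul_of_nonneg_left (add_le_add (hpa x hx) (hpa _ hz)) (by linarith)
        _ = 2 * a - 2 * a * s := by ring
    have := le_sub_mul_csSup ⟨0, zero_mem_weight_set hy⟩ (by linarith) hadmissible
    unfold weight
    linarith
  · have := bdness_le_weight hx hy
    gcongr

theorem seminorm_le_of_weight {V : Type*} [AddCommGroup V] [Module ℝ V]
    (Z : Set V) (hZ : Convex ℝ Z) (p : Seminorm ℝ V) (a : ℝ)
    (hpa : ∀ x ∈ Z, p x ≤ a)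
    (x y : V) (hx : x ∈ Z) (hy : y ∈ Z) :
    p (x - y) ≤ 2 * a * (1 - weight Z y x) ∧
      2 * a * (1 - weight Z y x) ≤ 2 * a * (1 - bdness Z y) :=
  seminorm_le_of_weight_general Z p a hpa x y hx hy
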